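/- Let p be a prime, and in the Heisenberg pro-p group of 3×3 upper unitriangular matrices over ℤ_p let x = I + E₁₂ and y = I + E₂₃. Then the closure H of the subgroup generated by x and y^p equals the set { I + aE₁₂ + pbE₂₃ + pcE₁₃ : a, b, c ∈ ℤ_p }. -/

import Mathlib

open Matrix

variable (p : ℕ) [Fact p.Prime]

/-- `3 × 3` matrices over `ℤ_p`. -/
abbrev Mat3 (p : ℕ) [Fact p.Prime] := Matrix (Fin 3) (Fin 3) ℤ_[p]

/-- Elementary transvection `I + c · Eᵢⱼ` (for `i ≠ j`), as a unit of the matrix ring,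
i.e. as an element of `GL₃(ℤ_p)`. -/
noncomputable def transvection3 (i j : Fin 3) (hij : i ≠ j) (c : ℤ_[p]) : (Mat3 p)ˣ where
  val := 1 + single i j c
  inv := 1 - single i j c
  val_inv := by
    have h : single i j c * single i j c = (0 : Mat3 p) :=
      Matrix.single_mul_single_of_ne c i j i hij.symm c
    have : (1 + single i j c) * (1 - single i j c)
        = 1 - single i j c * single i j c := by noncomm_ring
    rw [this, h, sub_zero]
  inv_val := by
    have h : single i j c * single i j c = (0 : Mat3 p) :=
      Matrix.single_mul_single_of_ne c i j i hij.symm c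
    have : (1 - single i j c) * (1 + single i j c)
        = 1 - single i j c * single i j c := by noncomm_ring
    rw [this, h, sub_zero]

/-- The Heisenberg pro-`p` group: the subgroup of `GL₃(ℤ_p)` of upper unitriangular
matrices. -/
def heisenberg : Subgroup (Mat3 p)ˣ where
  carrier := {M | (M : Mat3 p) 0 0 = 1 ∧ (M : Mat3 p) 1 1 = 1 ∧ (M : Mat3 p) 2 2 = 1 ∧
    (M : Mat3 p) 1 0 = 0 ∧ (M : Mat3 p) 2 0 = 0 ∧ (M : Mat3 p) 2 1 = 0}
  one_mem' := by
    refine ⟨?_, ?_, ?_, ?_, ?_, ?_⟩ <;> simp [Matrix.one_apply]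
  mul_mem' := by
    rintro a b ⟨a1, a2, a3, a4, a5, a6⟩ ⟨b1, b2, b3, b4, b5, b6⟩
    refine ⟨?_, ?_, ?_, ?_, ?_, ?_⟩ <;>
      simp [Units.val_mul, Matrix.mul_apply, Fin.sum_univ_three, a1, a2, a3, a4, a5, a6,
        b1, b2, b3, b4, b5, b6]
  inv_mem' := by
    rintro a ⟨a1, a2, a3, a4, a5, a6⟩
    have hNM : (↑a⁻¹ : Mat3 p) * (a : Mat3 p) = 1 := by
      rw [← Units.val_mul, inv_mul_cancel, Units.val_one]
    set N : Mat3 p := (↑a⁻¹ : Mat3 p) with hN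
    have e : ∀ i j : Fin 3, (N * (a : Mat3 p)) i j = (1 : Mat3 p) i j := by
      intro i j; rw [hNM]
    have e10 := e 1 0
    have e20 := e 2 0
    have e21 := e 2 1
    have e00 := e 0 0
    have e11 := e 1 1
    have e22 := e 2 2
    simp [Matrix.mul_apply, Fin.sum_univ_three, a1, a2, a3, a4, a5, a6,
      Matrix.one_apply] at e10 e20 e21 e00 e11 e22
    have h10 : N 1 0 = 0 := e10
    have h20 : N 2 0 = 0 := e20
    have h21 : N 2 1 = 0 := by
      rw [h20] at e21; simpa using e21
    have h00 : N 0 0 = 1 := e00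
    have h11 : N 1 1 = 1 := by
      rw [h10] at e11; simpa using e11
    have h22 : N 2 2 = 1 := by
      rw [h20, h21] at e22; simpa using e22
    exact ⟨h00, h11, h22, h10, h20, h21⟩

/-- `x = I + E₁₂`. -/
noncomputable def xH : ↥(heisenberg p) :=
  ⟨transvection3 p 0 1 (by decide) 1, by
    refine ⟨?_, ?_, ?_, ?_, ?_, ?_⟩ <;>
      simp [transvection3, Matrix.one_apply, Matrix.single]⟩

/-- `y = I + E₂₃`. -/
noncomputable def yH : ↥(heisenberg p) :=
  ⟨transvection3 p 1 2 (by decide) 1, by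
    refine ⟨?_, ?_, ?_, ?_, ?_, ?_⟩ <;>
      simp [transvection3, Matrix.one_apply, Matrix.single]⟩

/-- `z = I + E₁₃`. -/
noncomputable def zH : ↥(heisenberg p) :=
  ⟨transvection3 p 0 2 (by decide) 1, by
    refine ⟨?_, ?_, ?_, ?_, ?_, ?_⟩ <;>
      simp [transvection3, Matrix.one_apply, Matrix.single]⟩

/-! Write `(a, b, c)` for `I + a·E₁₂ + b·E₂₃ + c·E₁₃`, so that
`(a, b, c) (a', b', c') = (a + a', b + b', c + c' + a b')`. The matrices `(a, p b, p c)` form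
a subgroup containing `x = (1, 0, 0)` and `yᵖ = (0, p, 0)`; it is the continuous image of the
compact space `ℤ_p³`, hence closed, and so contains the closure `H`. Conversely, with the
commutator `w = [x, yᵖ] = (0, 0, p)`, every integral point `(A, p B, p C) = (yᵖ)ᴮ xᴬ wᶜ` lies
in the abstract subgroup generated by `x` and `yᵖ`, and `ℤ³` is dense in `ℤ_p³`. -/

section HeisenbergMatrix

variable {R : Type*} [CommRing R]

def heisMat (a b c : R) : Matrix (Fin 3) (Fin 3) R :=
  1 + single 0 1 a + single 1 2 b + single 0 2 c

theorem heisMat_mul (a b c a' b' c' : R) :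
    heisMat a b c * heisMat a' b' c' = heisMat (a + a') (b + b') (c + c' + a * b') := by
  ext i j
  fin_cases i <;> fin_cases j <;>
    simp [heisMat, mul_apply, Fin.sum_univ_three, single, one_apply] <;> ring

theorem heisMat_zero : heisMat (0 : R) 0 0 = 1 := by
  simp [heisMat]

theorem continuous_heisMat [TopologicalSpace R] [IsTopologicalRing R] :
    Continuous fun t : R × R × R => heisMat t.1 t.2.1 t.2.2 := by
  refine continuous_matrix fun i j => ?_
  fin_cases i <;> fin_cases j <;> simp [heisMat, single, one_apply] <;> fun_prop

end HeisenbergMatrix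

section HeisenbergCoordinates

variable {p}

noncomputable def heisH (a b c : ℤ_[p]) : heisenberg p where
  val :=
    { val := heisMat a b c
      inv := heisMat (-a) (-b) (a * b - c)
      val_inv := by rw [heisMat_mul, ← heisMat_zero]; congr 1 <;> ring
      inv_val := by rw [heisMat_mul, ← heisMat_zero]; congr 1 <;> ring }
  property := by
    refine ⟨?_, ?_, ?_, ?_, ?_, ?_⟩ <;> simp [heisMat, single, one_apply]

@[simp]
theorem val_heisH (a b c : ℤ_[p]) : ((heisH a b c : (Mat3 p)ˣ) : Mat3 p) = heisMat a b c :=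
  rfl

theorem heisH_mul (a b c a' b' c' : ℤ_[p]) :
    heisH a b c * heisH a' b' c' = heisH (a + a') (b + b') (c + c' + a * b') :=
  Subtype.ext <| Units.ext <| heisMat_mul a b c a' b' c'

theorem heisH_zero : heisH (0 : ℤ_[p]) 0 0 = 1 :=
  Subtype.ext <| Units.ext heisMat_zero

theorem heisH_inv (a b c : ℤ_[p]) : (heisH a b c)⁻¹ = heisH (-a) (-b) (a * b - c) := by
  refine inv_eq_of_mul_eq_one_right ?_
  rw [heisH_mul, ← heisH_zero]
  congr 1 <;> ring

theorem heisH_zpow_of_mul_eq_zero {a b : ℤ_[p]} (hab : a * b = 0) (c : ℤ_[p]) (n : ℤ) :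
    heisH a b c ^ n = heisH ((n : ℤ_[p]) * a) ((n : ℤ_[p]) * b) ((n : ℤ_[p]) * c) := by
  induction n using Int.induction_on with
  | zero => simp [heisH_zero]
  | succ n ih =>
    rw [_root_.zpow_add_one, ih, heisH_mul]
    push_cast
    congr 1
    · ring
    · ring
    · linear_combination (n : ℤ_[p]) * hab
  | pred n ih =>
    rw [_root_.zpow_sub_one, ih, heisH_inv, heisH_mul]
    push_cast
    congr 1
    · ring
    · ring
    · linear_combination ((n : ℤ_[p]) + 1) * hab

theorem continuous_heisH :
    Continuous fun t : ℤ_[p] × ℤ_[p] × ℤ_[p] => heisH t.1 t.2.1 t.2.2 := by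
  have hinv : Continuous fun t : ℤ_[p] × ℤ_[p] × ℤ_[p] =>
      (-t.1, -t.2.1, t.1 * t.2.1 - t.2.2) := by
    fun_prop
  exact (Units.continuous_iff.2 ⟨continuous_heisMat, continuous_heisMat.comp hinv⟩).subtype_mk _

noncomputable def heisParam (t : ℤ_[p] × ℤ_[p] × ℤ_[p]) : heisenberg p :=
  heisH t.1 (p * t.2.1) (p * t.2.2)

theorem continuous_heisParam : Continuous (heisParam (p := p)) := by
  have h : Continuous fun t : ℤ_[p] × ℤ_[p] × ℤ_[p] =>
      (t.1, (p : ℤ_[p]) * t.2.1, (p : ℤ_[p]) * t.2.2) := by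
    fun_prop
  exact continuous_heisH.comp h

end HeisenbergCoordinates

open scoped commutatorElement

theorem xH_eq_heisH : xH p = heisH 1 0 0 :=
  Subtype.ext <| Units.ext <| by simp [xH, transvection3, heisMat]

theorem yH_pow_eq_heisH : yH p ^ p = heisH 0 (p : ℤ_[p]) 0 := by
  have hy : yH p = heisH 0 1 0 :=
    Subtype.ext <| Units.ext <| by simp [yH, transvection3, heisMat]
  rw [hy, ← zpow_natCast, heisH_zpow_of_mul_eq_zero (zero_mul 1)]
  simp

theorem commutatorElement_xH_yH_pow : ⁅xH p, yH p ^ p⁆ = heisH 0 0 (p : ℤ_[p]) := by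
  rw [commutatorElement_def, xH_eq_heisH, yH_pow_eq_heisH, heisH_inv, heisH_inv, heisH_mul,
    heisH_mul, heisH_mul]
  congr 1 <;> ring

noncomputable def heisParamSubgroup : Subgroup (heisenberg p) where
  carrier := Set.range heisParam
  one_mem' := ⟨0, by simp [heisParam, heisH_zero]⟩
  mul_mem' := by
    rintro _ _ ⟨⟨a, b, c⟩, rfl⟩ ⟨⟨a', b', c'⟩, rfl⟩
    refine ⟨(a + a', b + b', c + c' + a * b'), ?_⟩
    simp only [heisParam, heisH_mul]
    congr 1 <;> ring
  inv_mem' := by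
    rintro _ ⟨⟨a, b, c⟩, rfl⟩
    refine ⟨(-a, -b, a * b - c), ?_⟩
    simp only [heisParam, heisH_inv]
    congr 1 <;> ring

theorem isClosed_heisParamSubgroup : IsClosed (heisParamSubgroup p : Set (heisenberg p)) :=
  (isCompact_range continuous_heisParam).isClosed

theorem closure_le_heisParamSubgroup :
    Subgroup.closure {xH p, yH p ^ p} ≤ heisParamSubgroup p := by
  rw [Subgroup.closure_le]
  rintro _ (rfl | rfl)
  · exact ⟨(1, 0, 0), by simp [heisParam, xH_eq_heisH]⟩
  · exact ⟨(0, 1, 0), by simp [heisParam, yH_pow_eq_heisH]⟩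

theorem heisParam_intCast_mem_closure (A B C : ℤ) :
    heisParam ((A : ℤ_[p]), (B : ℤ_[p]), (C : ℤ_[p])) ∈
      Subgroup.closure {xH p, yH p ^ p} := by
  have hx : xH p ∈ Subgroup.closure {xH p, yH p ^ p} := Subgroup.subset_closure (by simp)
  have hy : yH p ^ p ∈ Subgroup.closure {xH p, yH p ^ p} := Subgroup.subset_closure (by simp)
  have hdecomp : heisParam ((A : ℤ_[p]), (B : ℤ_[p]), (C : ℤ_[p])) =
      (yH p ^ p) ^ B * xH p ^ A * ⁅xH p, yH p ^ p⁆ ^ C := by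
    rw [commutatorElement_xH_yH_pow, yH_pow_eq_heisH, xH_eq_heisH,
      heisH_zpow_of_mul_eq_zero (zero_mul _), heisH_zpow_of_mul_eq_zero (mul_zero _),
      heisH_zpow_of_mul_eq_zero (zero_mul _), heisH_mul, heisH_mul, heisParam]
    congr 1 <;> ring
  rw [hdecomp, commutatorElement_def]
  exact mul_mem (mul_mem (zpow_mem hy B) (zpow_mem hx A))
    (zpow_mem (mul_mem (mul_mem (mul_mem hx hy) (inv_mem hx)) (inv_mem hy)) C)

theorem heisParam_mem_topologicalClosure (a b c : ℤ_[p]) :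
    heisParam (a, b, c) ∈ (Subgroup.closure {xH p, yH p ^ p}).topologicalClosure :=
  PadicInt.denseRange_intCast.induction_on₃
    ((Subgroup.isClosed_topologicalClosure _).preimage continuous_heisParam)
    (fun A B C => Subgroup.le_topologicalClosure _ (heisParam_intCast_mem_closure p A B C))
    a b c

/-- In the Heisenberg pro-`p` group, the closure `H` of the subgroup
generated by `x = I + E₁₂` and `y ^ p` (`y = I + E₂₃`) equals the set
`{ I + a·E₁₂ + p·b·E₂₃ + p·c·E₁₃ : a, b, c ∈ ℤ_p }`. -/
theorem closure_x_yp_eq :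
    ((Subgroup.closure {xH p, (yH p) ^ p}).topologicalClosure :
        Set ↥(heisenberg p)) =
      {M : ↥(heisenberg p) | ∃ a b c : ℤ_[p],
        ((M : (Mat3 p)ˣ) : Mat3 p) =
          1 + single 0 1 a + single 1 2 ((p : ℤ_[p]) * b) +
            single 0 2 ((p : ℤ_[p]) * c)} := by
  ext M
  constructor
  · intro hM
    obtain ⟨⟨a, b, c⟩, rfl⟩ := Subgroup.topologicalClosure_minimal _
      (closure_le_heisParamSubgroup p) (isClosed_heisParamSubgroup p) hM
    exact ⟨a, b, c, rfl⟩
  · rintro ⟨a, b, c, h⟩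
    obtain rfl : M = heisParam (a, b, c) := Subtype.ext (Units.ext h)
    exact heisParam_mem_topologicalClosure p a b c
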